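/- arXiv:2509.03886 — 2 statements merged into one kernel-verified Lean document; each statement's English description precedes it below -/
import Mathlib

section
/- Let B, E ∈ ℝ³ and let F = [[B̃, −iE],[iEᵀ, 0]] and F̂ = [[Ẽ, iB],[−iBᵀ, 0]] be the associated 4×4 complex matrices, with r₂ = −EᵀB. Then F·F̂ = r₂·I₄ and F̂·F = r₂·I₄, where I₄ is the 4×4 identity matrix. -/
/-!
Split `ℂ⁴ = ℂ³ ⊕ ℂ` and write `F`, `F̂` in blocks. The double cross product identity
`(α × E) × B = (α ⬝ B) E - (E ⬝ B) α` gives `B̃ Ẽ = E Bᵀ - (E ⬝ B) I₃`, and the coupling term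
`(-iE)(-iBᵀ) = -E Bᵀ` cancels the rank-one part, leaving `-(E ⬝ B) I₃`. The off-diagonal blocks are
`i B̃ B = i (B × B) = 0` and its transpose analogue, and the corner is `(iEᵀ)(iB) = -(E ⬝ B)`.
The same computation with the roles of `B` and `E` swapped gives `F̂ F`.
-/

open Matrix

/-- The 4×4 complex field matrix `F = [[B̃, −iE],[iEᵀ, 0]]`, where `B̃α = α × B`. -/
noncomputable def Fmat (B E : Fin 3 → ℝ) : Matrix (Fin 4) (Fin 4) ℂ :=
  !![0, (B 2 : ℂ), -(B 1 : ℂ), -Complex.I * (E 0 : ℂ);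
     -(B 2 : ℂ), 0, (B 0 : ℂ), -Complex.I * (E 1 : ℂ);
     (B 1 : ℂ), -(B 0 : ℂ), 0, -Complex.I * (E 2 : ℂ);
     Complex.I * (E 0 : ℂ), Complex.I * (E 1 : ℂ), Complex.I * (E 2 : ℂ), 0]

/-- The 4×4 complex matrix `F̂ = [[Ẽ, iB],[−iBᵀ, 0]]`, where `Ẽα = α × E`. -/
noncomputable def Fhat (B E : Fin 3 → ℝ) : Matrix (Fin 4) (Fin 4) ℂ :=
  !![0, (E 2 : ℂ), -(E 1 : ℂ), Complex.I * (B 0 : ℂ);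
     -(E 2 : ℂ), 0, (E 0 : ℂ), Complex.I * (B 1 : ℂ);
     (E 1 : ℂ), -(E 0 : ℂ), 0, Complex.I * (B 2 : ℂ);
     -Complex.I * (B 0 : ℂ), -Complex.I * (B 1 : ℂ), -Complex.I * (B 2 : ℂ), 0]

variable {R : Type*} [CommRing R]

namespace Matrix

def crossMatrix (b : Fin 3 → R) : Matrix (Fin 3) (Fin 3) R :=
  !![0, b 2, -b 1; -b 2, 0, b 0; b 1, -b 0, 0]

theorem crossMatrix_mulVec (b v : Fin 3 → R) : crossMatrix b *ᵥ v = v ⨯₃ b := by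
  ext i
  fin_cases i <;> simp [crossMatrix, cross_apply, mulVec, dotProduct, Fin.sum_univ_three] <;> ring

theorem crossMatrix_transpose (b : Fin 3 → R) : (crossMatrix b)ᵀ = -crossMatrix b := by
  ext i j
  fin_cases i <;> fin_cases j <;> simp [crossMatrix]

theorem crossMatrix_mulVec_self (b : Fin 3 → R) : crossMatrix b *ᵥ b = 0 := by
  rw [crossMatrix_mulVec, cross_self]

theorem vecMul_crossMatrix_self (b : Fin 3 → R) : b ᵥ* crossMatrix b = 0 := by
  rw [← mulVec_transpose, crossMatrix_transpose, neg_mulVec, crossMatrix_mulVec_self, neg_zero]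

theorem crossMatrix_mul_crossMatrix (b e : Fin 3 → R) :
    crossMatrix b * crossMatrix e = vecMulVec e b - (e ⬝ᵥ b) • 1 := by
  refine ext_iff_mulVec.2 fun v => ?_
  rw [← mulVec_mulVec, crossMatrix_mulVec, crossMatrix_mulVec, cross_cross_eq_smul_sub_smul,
    sub_mulVec, vecMulVec_mulVec, op_smul_eq_smul, smul_mulVec, one_mulVec, dotProduct_comm v b]

end Matrix

def fieldMatrix (c d : R) (b e : Fin 3 → R) : Matrix (Fin 3 ⊕ Fin 1) (Fin 3 ⊕ Fin 1) R :=
  fromBlocks (crossMatrix b) (c • replicateCol (Fin 1) e) (d • replicateRow (Fin 1) e) 0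

theorem fieldMatrix_mul_fieldMatrix {c d c' d' : R} (hcd' : c * d' = -1) (hdc' : d * c' = -1)
    (b e : Fin 3 → R) : fieldMatrix c d b e * fieldMatrix c' d' e b = -(e ⬝ᵥ b) • 1 := by
  rw [fieldMatrix, fieldMatrix, fromBlocks_multiply, ← fromBlocks_one, fromBlocks_smul]
  congr 1
  · have hrankOne : replicateCol (Fin 1) e * replicateRow (Fin 1) b = vecMulVec e b := by
      convert (vecMulVec_eq (Fin 1) e b).symm
    rw [crossMatrix_mul_crossMatrix, Matrix.smul_mul, Matrix.mul_smul, smul_smul, hrankOne, hcd',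
      neg_one_smul, neg_smul]
    abel
  · rw [Matrix.mul_smul, ← replicateCol_mulVec, crossMatrix_mulVec_self]
    simp
  · rw [Matrix.smul_mul, ← replicateRow_vecMul, vecMul_crossMatrix_self]
    simp
  · ext i j
    simp [Subsingleton.elim i j, ← mul_assoc, mul_comm c' d, hdc']

theorem Fmat_eq_reindex (B E : Fin 3 → ℝ) :
    Fmat B E = reindexAlgEquiv ℂ ℂ finSumFinEquiv
      (fieldMatrix (-Complex.I) Complex.I (Complex.ofReal ∘ B) (Complex.ofReal ∘ E)) := by
  ext i j
  fin_cases i <;> fin_cases j <;> rfl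

theorem Fhat_eq_reindex (B E : Fin 3 → ℝ) :
    Fhat B E = reindexAlgEquiv ℂ ℂ finSumFinEquiv
      (fieldMatrix Complex.I (-Complex.I) (Complex.ofReal ∘ E) (Complex.ofReal ∘ B)) := by
  ext i j
  fin_cases i <;> fin_cases j <;> rfl

theorem F_mul_Fhat (B E : Fin 3 → ℝ) (r₂ : ℝ) (hr₂ : r₂ = -(E ⬝ᵥ B)) :
    Fmat B E * Fhat B E = (r₂ : ℂ) • (1 : Matrix (Fin 4) (Fin 4) ℂ) ∧
      Fhat B E * Fmat B E = (r₂ : ℂ) • (1 : Matrix (Fin 4) (Fin 4) ℂ) := by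
  have hI : Complex.I * Complex.I = -1 := Complex.I_mul_I
  have hnegI : -Complex.I * -Complex.I = -1 := by rw [neg_mul_neg, hI]
  have hr₂' : (r₂ : ℂ) = -((Complex.ofReal ∘ E) ⬝ᵥ (Complex.ofReal ∘ B)) := by
    rw [hr₂, Complex.ofReal_neg, ← Complex.ofRealHom_eq_coe, RingHom.map_dotProduct]
    rfl
  rw [Fmat_eq_reindex, Fhat_eq_reindex, ← map_mul, ← map_mul,
    fieldMatrix_mul_fieldMatrix hnegI hI, fieldMatrix_mul_fieldMatrix hI hnegI,
    dotProduct_comm (Complex.ofReal ∘ B), ← hr₂', map_smul, map_one]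
  exact ⟨rfl, rfl⟩
end

section
/- (Total-derivative lemma for quadratic potentials.) Let n ≥ 1, let Q be a symmetric n×n real matrix, let l ≥ 0 be an integer, and let x : ℝ → ℝⁿ be (2l+1)-times continuously differentiable. Define G(t) = Σ_{j=0}^{l−1} (−1)^j · x^{(j)}(t)ᵀ Q x^{(2l−j)}(t) + (−1)^l · (1/2) · x^{(l)}(t)ᵀ Q x^{(l)}(t), where x^{(j)} denotes the j-th derivative. Then G is differentiable and G′(t) = x(t)ᵀ Q x^{(2l+1)}(t) for all t ∈ ℝ; i.e. x(t)ᵀ Q x^{(2l+1)}(t) is a total derivative. -/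
open Matrix

/-
Write `y k` for the `k`-th derivative of `x` and `B a b = aᵀQb`, a symmetric bilinear form. By the
product rule, `(-1)^j B(y j, y (2l-j))` has derivative `T j - T (j+1)` with
`T j = (-1)^j B(y j, y (2l+1-j))`, and by symmetry `(-1)^l (1/2) B(y l, y l)` has derivative `T l`.
The sum telescopes to `T 0 = B(x, y (2l+1))`.
-/

theorem ContDiff.hasDerivAt_iteratedDeriv {𝕜 : Type*} [NontriviallyNormedField 𝕜]
    {E : Type*} [NormedAddCommGroup E] [NormedSpace 𝕜 E] {f : 𝕜 → E} {N m : ℕ}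
    (hf : ContDiff 𝕜 N f) (hm : m < N) (t : 𝕜) :
    HasDerivAt (iteratedDeriv m f) (iteratedDeriv (m + 1) f t) t := by
  rw [iteratedDeriv_succ]
  exact (hf.differentiable_iteratedDeriv m (mod_cast hm) t).hasDerivAt

theorem Matrix.IsSymm.dotProduct_mulVec_comm {R n : Type*} [CommSemiring R] [Fintype n]
    {Q : Matrix n n R} (hQ : Q.IsSymm) (a b : n → R) : a ⬝ᵥ (Q *ᵥ b) = b ⬝ᵥ (Q *ᵥ a) := by
  rw [dotProduct_mulVec, ← mulVec_transpose, hQ.eq, dotProduct_comm]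

section AlternatingSum

variable {𝕜 : Type*} [NontriviallyNormedField 𝕜] [CharZero 𝕜]
  {E F : Type*} [NormedAddCommGroup E] [NormedSpace 𝕜 E] [NormedAddCommGroup F] [NormedSpace 𝕜 F]
  {B : E →L[𝕜] E →L[𝕜] F} {y : ℕ → 𝕜 → E} {l : ℕ} {t : 𝕜}

theorem ContinuousLinearMap.hasDerivAt_alternating_sum_of_bilinear (hB : ∀ a b, B a b = B b a)
    (hy : ∀ k ≤ 2 * l, HasDerivAt (y k) (y (k + 1) t) t) :
    HasDerivAt (fun s => ∑ j ∈ Finset.range l, (-1 : 𝕜) ^ j • B (y j s) (y (2 * l - j) s) +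
        ((-1 : 𝕜) ^ l * (1 / 2)) • B (y l s) (y l s))
      (B (y 0 t) (y (2 * l + 1) t)) t := by
  obtain ⟨T, hT⟩ : ∃ T : ℕ → F, ∀ j, T j = (-1 : 𝕜) ^ j • B (y j t) (y (2 * l + 1 - j) t) :=
    ⟨_, fun _ => rfl⟩
  have hsum : HasDerivAt (fun s => ∑ j ∈ Finset.range l, (-1 : 𝕜) ^ j • B (y j s) (y (2 * l - j) s))
      (∑ j ∈ Finset.range l, (T j - T (j + 1))) t := by
    refine HasDerivAt.fun_sum fun j hj => ?_
    have hjl : j < l := Finset.mem_range.1 hj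
    refine ((B.hasDerivAt_of_bilinear (fun _ => hy j (by omega))
      (fun _ => hy (2 * l - j) (by omega))).const_smul ((-1 : 𝕜) ^ j)).congr_deriv ?_
    rw [hT, hT, show 2 * l - j + 1 = 2 * l + 1 - j by omega,
      show 2 * l + 1 - (j + 1) = 2 * l - j by omega, hB (y (j + 1) t), pow_succ]
    module
  have hhalf : HasDerivAt (fun s => ((-1 : 𝕜) ^ l * (1 / 2)) • B (y l s) (y l s)) (T l) t := by
    refine ((B.hasDerivAt_of_bilinear (fun _ => hy l (by omega))
      (fun _ => hy l (by omega))).const_smul ((-1 : 𝕜) ^ l * (1 / 2))).congr_deriv ?_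
    rw [hT, show 2 * l + 1 - l = l + 1 by omega, hB (y (l + 1) t)]
    module
  refine (hsum.add hhalf).congr_deriv ?_
  rw [Finset.sum_range_sub', sub_add_cancel, hT]
  simp

end AlternatingSum

theorem quadratic_total_derivative_general (n : ℕ)
    (Q : Matrix (Fin n) (Fin n) ℝ) (hQ : Q.IsSymm) (l : ℕ)
    (x : ℝ → (Fin n → ℝ)) (hx : ContDiff ℝ (2 * l + 1 : ℕ) x)
    (G : ℝ → ℝ)
    (hG : ∀ t, G t =
      (∑ j ∈ Finset.range l, (-1 : ℝ) ^ j *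
        (iteratedDeriv j x t ⬝ᵥ (Q *ᵥ iteratedDeriv (2 * l - j) x t))) +
      (-1 : ℝ) ^ l * (1 / 2) *
        (iteratedDeriv l x t ⬝ᵥ (Q *ᵥ iteratedDeriv l x t))) :
    ∀ t, HasDerivAt G (x t ⬝ᵥ (Q *ᵥ iteratedDeriv (2 * l + 1) x t)) t := by
  intro t
  let B := (toLinearMap₂' ℝ Q : (Fin n → ℝ) →ₗ[ℝ] (Fin n → ℝ) →ₗ[ℝ] ℝ).toContinuousBilinearMap
  have hB : ∀ a b, B a b = a ⬝ᵥ (Q *ᵥ b) := toLinearMap₂'_apply' Q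
  have h := B.hasDerivAt_alternating_sum_of_bilinear (l := l) (y := fun k => iteratedDeriv k x)
    (by simpa only [hB] using hQ.dotProduct_mulVec_comm)
    (fun k hk => hx.hasDerivAt_iteratedDeriv (by omega) t)
  rw [funext hG]
  simpa only [hB, smul_eq_mul, iteratedDeriv_zero] using h

/-- Total-derivative lemma for quadratic potentials: for symmetric `Q`,
`xᵀQx^{(2l+1)}` is the derivative of
`Σ_{j<l} (−1)^j x^{(j)ᵀ}Qx^{(2l−j)} + (−1)^l (1/2) x^{(l)ᵀ}Qx^{(l)}`. -/
theorem quadratic_total_derivative (n : ℕ) (hn : 1 ≤ n)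
    (Q : Matrix (Fin n) (Fin n) ℝ) (hQ : Q.IsSymm) (l : ℕ)
    (x : ℝ → (Fin n → ℝ)) (hx : ContDiff ℝ (2 * l + 1 : ℕ) x)
    (G : ℝ → ℝ)
    (hG : ∀ t, G t =
      (∑ j ∈ Finset.range l, (-1 : ℝ) ^ j *
        (iteratedDeriv j x t ⬝ᵥ (Q *ᵥ iteratedDeriv (2 * l - j) x t))) +
      (-1 : ℝ) ^ l * (1 / 2) *
        (iteratedDeriv l x t ⬝ᵥ (Q *ᵥ iteratedDeriv l x t))) :
    ∀ t, HasDerivAt G (x t ⬝ᵥ (Q *ᵥ iteratedDeriv (2 * l + 1) x t)) t :=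
  quadratic_total_derivative_general n Q hQ l x hx G hG
end
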